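/- Let E ⊆ ℝ^d be a bounded open set of positive finite Lebesgue measure, k ≥ 1 an integer, and P the componentwise orthogonal projection of L²(E;ℝ^d) onto vector fields whose components are polynomials of total degree at most k−1. Let κ : E → ℝ^{d×d} be measurable with |κ(x)ξ| ≤ α*|ξ| for almost every x ∈ E and all ξ ∈ ℝ^d, where α* > 0. Then for all g, g_h ∈ L²(E;ℝ^d): ‖(I − P)(κ·(P g_h))‖²_{L²(E;ℝ^d)} ≤ 2 ‖P(κ·g) − κ·g‖²_{L²(E;ℝ^d)} + 8 (α*)² ‖g − g_h‖²_{L²(E;ℝ^d)} + 8 (α*)² ‖g_h − P g_h‖²_{L²(E;ℝ^d)}, where κ·f denotes the pointwise matrix–vector product x ↦ κ(x) f(x) and I the identity on L²(E;ℝ^d). -/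

import Mathlib

open MeasureTheory

/-- `p : ℝ^d → ℝ` is a real polynomial function of total degree at most `k`. -/
def IsPolyFunPi (d k : ℕ) (p : (Fin d → ℝ) → ℝ) : Prop :=
  ∃ P : MvPolynomial (Fin d) ℝ, P.totalDegree ≤ k ∧
    ∀ x, p x = MvPolynomial.eval x P

/-- `F` is the componentwise `L²(E;ℝ^d)`-orthogonal projection of `f` onto vector fields
with polynomial components of total degree at most `k`: each component of `F` is such a
polynomial, and `f − F` is orthogonal to all such polynomials, componentwise. -/
def IsVecProj (d k : ℕ) (E : Set (Fin d → ℝ))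
    (f F : (Fin d → ℝ) → (Fin d → ℝ)) : Prop :=
  (∀ i, IsPolyFunPi d k fun x => F x i) ∧
  ∀ i : Fin d, ∀ q, IsPolyFunPi d k q → ∫ x in E, (f x i - F x i) * q x = 0

/-!
Since `P(κ·g)` is itself a polynomial field, the best-approximation property of the orthogonal
projection gives `‖(I − P)(κ·Pg_h)‖² ≤ ‖κ·Pg_h − P(κ·g)‖²`. Splitting off `κ·g` with
`(a + b)² ≤ 2a² + 2b²`, the bound `|κ ξ| ≤ α*|ξ|` turns `‖κ·(Pg_h − g)‖²` into
`α*² ‖Pg_h − g‖²`, and splitting `Pg_h − g` through `g_h` in the same way gives the estimate.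
-/

open Bornology Matrix

section SquaredL2Distance

variable {X ι : Type*} [MeasurableSpace X] [Fintype ι]

noncomputable def sqL2Dist (μ : Measure X) (u v : X → ι → ℝ) : ℝ :=
  ∫ x, ∑ i, (u x i - v x i) ^ 2 ∂μ

variable {μ : Measure X}

theorem sqL2Dist_nonneg (u v : X → ι → ℝ) : 0 ≤ sqL2Dist μ u v :=
  integral_nonneg fun _ => Finset.sum_nonneg fun _ _ => sq_nonneg _

theorem sqL2Dist_comm (u v : X → ι → ℝ) : sqL2Dist μ u v = sqL2Dist μ v u := by
  simp only [sqL2Dist, sub_sq_comm]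

theorem integrable_sq_sub {f g : X → ℝ} (hf : MemLp f 2 μ) (hg : MemLp g 2 μ) :
    Integrable (fun x => (f x - g x) ^ 2) μ :=
  (hf.sub hg).integrable_sq

theorem integrable_sum_sq_sub {u v : X → ι → ℝ} (hu : MemLp u 2 μ) (hv : MemLp v 2 μ) :
    Integrable (fun x => ∑ i, (u x i - v x i) ^ 2) μ :=
  integrable_finsetSum _ fun i _ => integrable_sq_sub (hu.eval i) (hv.eval i)

theorem sqL2Dist_le_two_mul_add {u v w : X → ι → ℝ} (hu : MemLp u 2 μ) (hv : MemLp v 2 μ)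
    (hw : MemLp w 2 μ) :
    sqL2Dist μ u w ≤ 2 * sqL2Dist μ u v + 2 * sqL2Dist μ v w := by
  have huv := (integrable_sum_sq_sub hu hv).const_mul 2
  have hvw := (integrable_sum_sq_sub hv hw).const_mul 2
  rw [sqL2Dist, sqL2Dist, sqL2Dist, ← integral_const_mul, ← integral_const_mul,
    ← integral_add huv hvw]
  refine integral_mono_of_nonneg (ae_of_all _ fun _ => Finset.sum_nonneg fun _ _ => sq_nonneg _)
    (huv.add hvw) (ae_of_all _ fun x => ?_)
  simp only [Finset.mul_sum, ← Finset.sum_add_distrib]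
  gcongr with i
  nlinarith [sq_nonneg (u x i + w x i - 2 * v x i)]

end SquaredL2Distance

section MatrixBounds

variable {n : Type*} [Fintype n]

theorem Matrix.sum_sq_mulVec_le_of_sqrt_le {M : Matrix n n ℝ} {α : ℝ} {ξ : n → ℝ}
    (h : √(∑ i, (M *ᵥ ξ) i ^ 2) ≤ α * √(∑ i, ξ i ^ 2)) :
    ∑ i, (M *ᵥ ξ) i ^ 2 ≤ α ^ 2 * ∑ i, ξ i ^ 2 := by
  have hM : 0 ≤ ∑ i, (M *ᵥ ξ) i ^ 2 := Finset.sum_nonneg fun _ _ => sq_nonneg _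
  have hξ : 0 ≤ ∑ i, ξ i ^ 2 := Finset.sum_nonneg fun _ _ => sq_nonneg _
  calc ∑ i, (M *ᵥ ξ) i ^ 2 = √(∑ i, (M *ᵥ ξ) i ^ 2) ^ 2 := (Real.sq_sqrt hM).symm
    _ ≤ (α * √(∑ i, ξ i ^ 2)) ^ 2 := pow_le_pow_left₀ (Real.sqrt_nonneg _) h 2
    _ = α ^ 2 * ∑ i, ξ i ^ 2 := by rw [mul_pow, Real.sq_sqrt hξ]

theorem Matrix.abs_apply_le_of_sum_sq_mulVec_le {M : Matrix n n ℝ} {α : ℝ}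
    (h : ∀ ξ : n → ℝ, ∑ i, (M *ᵥ ξ) i ^ 2 ≤ α ^ 2 * ∑ i, ξ i ^ 2) (i j : n) :
    |M i j| ≤ |α| := by
  classical
  rw [← sq_le_sq]
  calc M i j ^ 2 ≤ ∑ i', M i' j ^ 2 :=
        Finset.single_le_sum (f := fun i' => M i' j ^ 2) (fun _ _ => sq_nonneg _)
          (Finset.mem_univ i)
    _ = ∑ i', (M *ᵥ Pi.single j 1) i' ^ 2 := by simp only [mulVec_single_one]; rfl
    _ ≤ α ^ 2 * ∑ i', (Pi.single j 1 : n → ℝ) i' ^ 2 := h _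
    _ = α ^ 2 := by simp [Pi.single_apply]

end MatrixBounds

section MulVec

variable {X n : Type*} [MeasurableSpace X] [Fintype n] {μ : Measure X}
  {κ : X → Matrix n n ℝ}

theorem MeasureTheory.MemLp.mulVec {p : ENNReal} {C : ℝ} {v : X → n → ℝ} (hv : MemLp v p μ)
    (hκm : ∀ i j, Measurable fun x => κ x i j) (hκC : ∀ᵐ x ∂μ, ∀ i j, |κ x i j| ≤ C) :
    MemLp (fun x => κ x *ᵥ v x) p μ := by
  refine MemLp.of_eval fun i => memLp_finsetSum _ fun j _ => ?_
  refine (hv.eval j).of_le_mul (c := C) ((hκm i j).aestronglyMeasurable.mul (hv.eval j).1) ?_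
  filter_upwards [hκC] with x hx
  rw [Real.norm_eq_abs, Real.norm_eq_abs, abs_mul]
  exact mul_le_mul_of_nonneg_right (hx i j) (abs_nonneg _)

theorem sqL2Dist_mulVec_le {α : ℝ}
    (hκ : ∀ᵐ x ∂μ, ∀ ξ : n → ℝ, ∑ i, (κ x *ᵥ ξ) i ^ 2 ≤ α ^ 2 * ∑ i, ξ i ^ 2)
    {u v : X → n → ℝ} (hu : MemLp u 2 μ) (hv : MemLp v 2 μ) :
    sqL2Dist μ (fun x => κ x *ᵥ u x) (fun x => κ x *ᵥ v x) ≤ α ^ 2 * sqL2Dist μ u v := by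
  rw [sqL2Dist, sqL2Dist, ← integral_const_mul]
  refine integral_mono_of_nonneg (ae_of_all _ fun _ => Finset.sum_nonneg fun _ _ => sq_nonneg _)
    ((integrable_sum_sq_sub hu hv).const_mul _) ?_
  filter_upwards [hκ] with x hx
  simpa only [← Pi.sub_apply, ← mulVec_sub] using hx (u x - v x)

end MulVec

theorem Continuous.memLp_restrict_of_isBounded {X F : Type*} [PseudoMetricSpace X]
    [ProperSpace X] [MeasurableSpace X] [OpensMeasurableSpace X] [NormedAddCommGroup F]
    {μ : Measure X} [IsFiniteMeasureOnCompacts μ] {f : X → F} {p : ENNReal} {E : Set X}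
    (hf : Continuous f) (hE : IsBounded E) : MemLp f p (μ.restrict E) := by
  have hK : IsCompact (closure E) := hE.isCompact_closure
  have : IsFiniteMeasure (μ.restrict (closure E)) :=
    isFiniteMeasure_restrict.mpr hK.measure_lt_top.ne
  obtain ⟨C, hC⟩ := hK.exists_bound_of_continuousOn hf.continuousOn
  refine MemLp.mono_measure (Measure.restrict_mono subset_closure le_rfl) ?_
  exact MemLp.of_bound hf.aestronglyMeasurable C
    (ae_restrict_of_forall_mem isClosed_closure.measurableSet hC)

theorem integral_sq_sub_le_of_integral_mul_eq_zero {X : Type*} [MeasurableSpace X]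
    {μ : Measure X} {f F Q : X → ℝ} (hf : MemLp f 2 μ) (hF : MemLp F 2 μ) (hQ : MemLp Q 2 μ)
    (horth : ∫ x, (f x - F x) * (F x - Q x) ∂μ = 0) :
    ∫ x, (f x - F x) ^ 2 ∂μ ≤ ∫ x, (f x - Q x) ^ 2 ∂μ := by
  have h₂ : Integrable (fun x => 2 * ((f x - F x) * (F x - Q x))) μ :=
    ((hf.sub hF).integrable_mul (hF.sub hQ)).const_mul 2
  have h₁₂ : Integrable (fun x => (f x - F x) ^ 2 + 2 * ((f x - F x) * (F x - Q x))) μ :=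
    (integrable_sq_sub hf hF).add h₂
  have hpythagoras : ∫ x, (f x - Q x) ^ 2 ∂μ = ∫ x, (f x - F x) ^ 2 ∂μ +
      2 * ∫ x, (f x - F x) * (F x - Q x) ∂μ + ∫ x, (F x - Q x) ^ 2 ∂μ := by
    calc ∫ x, (f x - Q x) ^ 2 ∂μ
        = ∫ x, (f x - F x) ^ 2 + 2 * ((f x - F x) * (F x - Q x)) + (F x - Q x) ^ 2 ∂μ := by
          congr 1 with x
          ring
      _ = _ := by
          rw [integral_add h₁₂ (integrable_sq_sub hF hQ),
            integral_add (integrable_sq_sub hf hF) h₂, integral_const_mul]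
  rw [hpythagoras, horth, mul_zero, add_zero, le_add_iff_nonneg_right]
  exact integral_nonneg fun x => sq_nonneg (F x - Q x)

namespace IsPolyFunPi

variable {d k : ℕ} {p q : (Fin d → ℝ) → ℝ}

theorem sub (hp : IsPolyFunPi d k p) (hq : IsPolyFunPi d k q) :
    IsPolyFunPi d k fun x => p x - q x := by
  obtain ⟨P, hP, hPp⟩ := hp
  obtain ⟨Q, hQ, hQq⟩ := hq
  exact ⟨P - Q, (MvPolynomial.totalDegree_sub P Q).trans (max_le hP hQ),
    fun x => by simp [hPp, hQq]⟩

theorem continuous (hp : IsPolyFunPi d k p) : Continuous p := by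
  obtain ⟨P, -, hPp⟩ := hp
  rw [funext hPp]
  exact MvPolynomial.continuous_eval P

end IsPolyFunPi

section PolynomialProjection

variable {d k : ℕ} {E : Set (Fin d → ℝ)}

theorem memLp_restrict_of_isPolyFunPi {F : (Fin d → ℝ) → Fin d → ℝ} {p : ENNReal}
    (hF : ∀ i, IsPolyFunPi d k fun x => F x i) (hE : IsBounded E) :
    MemLp F p (volume.restrict E) :=
  (continuous_pi fun i => (hF i).continuous).memLp_restrict_of_isBounded hE

theorem IsVecProj.sqL2Dist_le {f F Q : (Fin d → ℝ) → Fin d → ℝ} (hF : IsVecProj d k E f F)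
    (hE : IsBounded E) (hf : MemLp f 2 (volume.restrict E))
    (hQ : ∀ i, IsPolyFunPi d k fun x => Q x i) :
    sqL2Dist (volume.restrict E) f F ≤ sqL2Dist (volume.restrict E) f Q := by
  have hFL := memLp_restrict_of_isPolyFunPi (p := 2) hF.1 hE
  have hQL := memLp_restrict_of_isPolyFunPi (p := 2) hQ hE
  rw [sqL2Dist, sqL2Dist,
    integral_finsetSum _ fun i _ => integrable_sq_sub (hf.eval i) (hFL.eval i),
    integral_finsetSum _ fun i _ => integrable_sq_sub (hf.eval i) (hQL.eval i)]
  exact Finset.sum_le_sum fun i _ => integral_sq_sub_le_of_integral_mul_eq_zero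
    (hf.eval i) (hFL.eval i) (hQL.eval i) (hF.2 i _ ((hF.1 i).sub (hQ i)))

end PolynomialProjection

theorem inconsistency_lower_bound_general
    (d k : ℕ)
    (E : Set (Fin d → ℝ)) (hEb : Bornology.IsBounded E)
    (κ : (Fin d → ℝ) → Matrix (Fin d) (Fin d) ℝ)
    (hκm : ∀ i j, Measurable fun x => κ x i j)
    (αs : ℝ)
    (hκb : ∀ᵐ x ∂(volume.restrict E), ∀ ξ : Fin d → ℝ,
      Real.sqrt (∑ i, ((κ x).mulVec ξ i) ^ 2) ≤ αs * Real.sqrt (∑ i, (ξ i) ^ 2))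
    (g gh : (Fin d → ℝ) → (Fin d → ℝ))
    (hg : MemLp g 2 (volume.restrict E)) (hgh : MemLp gh 2 (volume.restrict E))
    (Pgh : (Fin d → ℝ) → (Fin d → ℝ)) (hPgh : IsVecProj d (k - 1) E gh Pgh)
    (Pkg : (Fin d → ℝ) → (Fin d → ℝ))
    (hPkg : IsVecProj d (k - 1) E (fun x => (κ x).mulVec (g x)) Pkg)
    (PkPgh : (Fin d → ℝ) → (Fin d → ℝ))
    (hPkPgh : IsVecProj d (k - 1) E (fun x => (κ x).mulVec (Pgh x)) PkPgh) :
    (∫ x in E, ∑ i, ((κ x).mulVec (Pgh x) i - PkPgh x i) ^ 2) ≤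
      2 * (∫ x in E, ∑ i, (Pkg x i - (κ x).mulVec (g x) i) ^ 2) +
        8 * αs ^ 2 * (∫ x in E, ∑ i, (g x i - gh x i) ^ 2) +
        8 * αs ^ 2 * (∫ x in E, ∑ i, (gh x i - Pgh x i) ^ 2) := by
  have hκ : ∀ᵐ x ∂(volume.restrict E), ∀ ξ, ∑ i, (κ x *ᵥ ξ) i ^ 2 ≤ αs ^ 2 * ∑ i, ξ i ^ 2 :=
    hκb.mono fun x hx ξ => Matrix.sum_sq_mulVec_le_of_sqrt_le (hx ξ)
  have hκC : ∀ᵐ x ∂(volume.restrict E), ∀ i j, |κ x i j| ≤ |αs| :=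
    hκ.mono fun x hx => Matrix.abs_apply_le_of_sum_sq_mulVec_le hx
  have hPghL := memLp_restrict_of_isPolyFunPi (p := 2) hPgh.1 hEb
  have hκPghL := hPghL.mulVec hκm hκC
  have hκgL := hg.mulVec hκm hκC
  have hbest := hPkPgh.sqL2Dist_le hEb hκPghL hPkg.1
  have hsplit := sqL2Dist_le_two_mul_add hκPghL hκgL (memLp_restrict_of_isPolyFunPi hPkg.1 hEb)
  have hκlip := sqL2Dist_mulVec_le hκ hPghL hg
  have hsplit' := sqL2Dist_le_two_mul_add hg hgh hPghL
  rw [sqL2Dist_comm (fun x => κ x *ᵥ g x) Pkg] at hsplit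
  rw [sqL2Dist_comm Pgh] at hκlip
  change sqL2Dist _ _ PkPgh ≤ 2 * sqL2Dist _ Pkg _ + 8 * αs ^ 2 * sqL2Dist _ g gh +
    8 * αs ^ 2 * sqL2Dist _ gh Pgh
  linarith [mul_le_mul_of_nonneg_left hsplit' (sq_nonneg αs),
    mul_nonneg (sq_nonneg αs) (sqL2Dist_nonneg (μ := volume.restrict E) g gh),
    mul_nonneg (sq_nonneg αs) (sqL2Dist_nonneg (μ := volume.restrict E) gh Pgh)]

/-- **Lower bound for the virtual inconsistency term** (key estimate of the Lemma on the
inconsistency terms): with `P = P_{k−1}` the componentwise `L²(E;ℝ^d)` projection onto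
polynomial vector fields of degree `≤ k−1`, and `|κ(x)ξ| ≤ α*|ξ|` a.e. on `E`,
`‖(I−P)(κ·Pg_h)‖² ≤ 2‖P(κ·g) − κ·g‖² + 8α*²‖g − g_h‖² + 8α*²‖g_h − Pg_h‖²`. -/
theorem inconsistency_lower_bound
    (d k : ℕ) (hk : 1 ≤ k)
    (E : Set (Fin d → ℝ)) (hE : IsOpen E) (hEb : Bornology.IsBounded E)
    (hpos : 0 < volume E) (hfin : volume E < ⊤)
    (κ : (Fin d → ℝ) → Matrix (Fin d) (Fin d) ℝ)
    (hκm : ∀ i j, Measurable fun x => κ x i j)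
    (αs : ℝ) (hαs : 0 < αs)
    (hκb : ∀ᵐ x ∂(volume.restrict E), ∀ ξ : Fin d → ℝ,
      Real.sqrt (∑ i, ((κ x).mulVec ξ i) ^ 2) ≤ αs * Real.sqrt (∑ i, (ξ i) ^ 2))
    (g gh : (Fin d → ℝ) → (Fin d → ℝ))
    (hg : MemLp g 2 (volume.restrict E)) (hgh : MemLp gh 2 (volume.restrict E))
    (Pgh : (Fin d → ℝ) → (Fin d → ℝ)) (hPgh : IsVecProj d (k - 1) E gh Pgh)
    (Pkg : (Fin d → ℝ) → (Fin d → ℝ))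
    (hPkg : IsVecProj d (k - 1) E (fun x => (κ x).mulVec (g x)) Pkg)
    (PkPgh : (Fin d → ℝ) → (Fin d → ℝ))
    (hPkPgh : IsVecProj d (k - 1) E (fun x => (κ x).mulVec (Pgh x)) PkPgh) :
    (∫ x in E, ∑ i, ((κ x).mulVec (Pgh x) i - PkPgh x i) ^ 2) ≤
      2 * (∫ x in E, ∑ i, (Pkg x i - (κ x).mulVec (g x) i) ^ 2) +
        8 * αs ^ 2 * (∫ x in E, ∑ i, (g x i - gh x i) ^ 2) +
        8 * αs ^ 2 * (∫ x in E, ∑ i, (gh x i - Pgh x i) ^ 2) :=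
  inconsistency_lower_bound_general d k E hEb κ hκm αs hκb g gh hg hgh Pgh hPgh Pkg hPkg PkPgh
    hPkPgh
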